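/- arXiv:1907.12394 — 3 statements merged into one kernel-verified Lean document; each statement's English description precedes it below -/
import Mathlib

section
/- Let △ be a continuous t-norm on I = [0,1] and ⋆ a binary operation on I. If the convolution ⋏ is a t-norm on L, then 1 ⋆ x = x ⋆ 1 = x for all x ∈ I. -/
open unitInterval

noncomputable section

instance : Fact ((0:ℝ) ≤ 1) := ⟨zero_le_one⟩

/-- A function `f : I → I` is normal if `sup {f x : x ∈ I} = 1`. -/
def IsNormal (f : I → I) : Prop := sSup (Set.range f) = 1

/-- A function `f : I → I` is convex if `f y ≥ min (f x) (f z)` whenever `x ≤ y ≤ z`. -/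
def IsConvexFn (f : I → I) : Prop :=
  ∀ x y z : I, x ≤ y → y ≤ z → min (f x) (f z) ≤ f y

/-- Membership in `L`, the set of normal convex functions from `I` to `I`. -/
def InL (f : I → I) : Prop := IsNormal f ∧ IsConvexFn f

/-- A t-norm on `I`: commutative, associative, increasing in each argument,
with neutral element `1`. -/
def IsTnorm (op : I → I → I) : Prop :=
  (∀ x y : I, op x y = op y x) ∧
  (∀ x y z : I, op (op x y) z = op x (op y z)) ∧
  (∀ y : I, Monotone fun x => op x y) ∧
  (∀ x : I, Monotone fun y => op x y) ∧
  (∀ x : I, op 1 x = x) ∧ (∀ x : I, op x 1 = x)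

/-- A t-conorm on `I`: commutative, associative, increasing in each argument,
with neutral element `0`. -/
def IsTconorm (op : I → I → I) : Prop :=
  (∀ x y : I, op x y = op y x) ∧
  (∀ x y z : I, op (op x y) z = op x (op y z)) ∧
  (∀ y : I, Monotone fun x => op x y) ∧
  (∀ x : I, Monotone fun y => op x y) ∧
  (∀ x : I, op 0 x = x) ∧ (∀ x : I, op x 0 = x)

/-- Continuity of a binary operation on `I`, as a map `I × I → I`. -/
def IsCont (op : I → I → I) : Prop := Continuous fun p : I × I => op p.1 p.2

/-- The convolution `(f ⋏ g)(x) = sup {f y ⋆ g z : y △ z = x}` (`star` playing the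
role of `⋆` and `tri` the role of `△`); the sup of the empty set is `0`. -/
def conv (star tri : I → I → I) (f g : I → I) : I → I :=
  fun x => sSup {a : I | ∃ y z : I, tri y z = x ∧ a = star (f y) (g z)}

/-- The meet `(f ⊓ g)(x) = sup {min (f y) (g z) : min y z = x}`. -/
def fmeet (f g : I → I) : I → I :=
  fun x => sSup {a : I | ∃ y z : I, min y z = x ∧ a = min (f y) (g z)}

/-- The partial order `f ⊑ g` iff `f ⊓ g = f`. -/
def sqle (f g : I → I) : Prop := fmeet f g = f

/-- The characteristic function `χ_{x}` of the singleton `{x}`. -/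
def chi (x : I) : I → I := fun t => if t = x then 1 else 0

/-- A binary operation `C` on functions is a t-norm on `L` if `L` is closed under `C` and,
on `L`, `C` is commutative, associative, has `χ_{1}` as neutral element, and is increasing
in each argument with respect to `⊑`. -/
def IsTnormOnL (C : (I → I) → (I → I) → (I → I)) : Prop :=
  (∀ f g, InL f → InL g → InL (C f g)) ∧
  (∀ f g, InL f → InL g → C f g = C g f) ∧
  (∀ f g h, InL f → InL g → InL h → C (C f g) h = C f (C g h)) ∧
  (∀ f, InL f → C f (chi 1) = f) ∧
  (∀ f g h, InL f → InL g → InL h → sqle g h → sqle (C f g) (C f h))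

/-- A binary operation `C` on functions is a t-conorm on `L` if `L` is closed under `C` and,
on `L`, `C` is commutative, associative, has `χ_{0}` as neutral element, and is increasing
in each argument with respect to `⊑`. -/
def IsTconormOnL (C : (I → I) → (I → I) → (I → I)) : Prop :=
  (∀ f g, InL f → InL g → InL (C f g)) ∧
  (∀ f g, InL f → InL g → C f g = C g f) ∧
  (∀ f g h, InL f → InL g → InL h → C (C f g) h = C f (C g h)) ∧
  (∀ f, InL f → C f (chi 0) = f) ∧
  (∀ f g h, InL f → InL g → InL h → sqle g h → sqle (C f g) (C f h))

/-- `f^L (x) = sup {f y : y ≤ x}`. -/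
def fL (f : I → I) : I → I := fun x => sSup (f '' Set.Iic x)

/-- `f^R (x) = sup {f y : y ≥ x}`. -/
def fR (f : I → I) : I → I := fun x => sSup (f '' Set.Ici x)

/-- The function `V_x (t) = (x - 1) * t + 1`. -/
def Vfn (x : I) : I → I := fun t =>
  ⟨(x.1 - 1) * t.1 + 1, by
    obtain ⟨hx0, hx1⟩ := x.2; obtain ⟨ht0, ht1⟩ := t.2
    constructor <;> nlinarith⟩

lemma tri_eq_one_iff (tri : I → I → I) (htri : IsTnorm tri) {y z : I}
    (hyz : tri y z = 1) : y = 1 ∧ z = 1 := by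
  obtain ⟨hc, ha, hm1, hm2, hn1, hn2⟩ := htri
  have hy : tri y z ≤ y := by
    have := hm2 y (le_one' : z ≤ 1); simpa [hn2] using this
  have hz : tri y z ≤ z := by
    have := hm1 z (le_one' : y ≤ 1); simpa [hn1] using this
  rw [hyz] at hy hz
  exact ⟨le_antisymm (le_one y) hy, le_antisymm (le_one z) hz⟩

lemma Vfn_one (x : I) : Vfn x 1 = x := by
  simp [Vfn, Subtype.ext_iff]

lemma Vfn_zero (x : I) : Vfn x 0 = 1 := by
  simp [Vfn, Subtype.ext_iff]

lemma Vfn_antitone (x : I) : Antitone (Vfn x) := by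
  intro a b hab
  simp only [Vfn, Subtype.mk_le_mk]
  have hx1 : x.1 ≤ 1 := x.2.2
  have : a.1 ≤ b.1 := hab
  nlinarith

lemma Vfn_inL (x : I) : InL (Vfn x) := by
  constructor
  · apply le_antisymm (sSup_le (by rintro a ⟨t, rfl⟩; exact le_one _))
    exact le_sSup ⟨0, Vfn_zero x⟩
  · intro a b c hab hbc
    exact le_trans (min_le_right _ _) (Vfn_antitone x hbc)

lemma chi_one_inL : InL (chi 1) := by
  constructor
  · apply le_antisymm (sSup_le (by rintro a ⟨t, rfl⟩; exact le_one _))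
    exact le_sSup ⟨1, by simp [chi]⟩
  · intro a b c hab hbc
    by_cases ha : a = 1
    · have hb : b = 1 := le_antisymm (le_one b) (ha ▸ hab)
      have hcb : chi 1 b = 1 := by simp [chi, hb]
      rw [hcb]; exact le_one'
    · simp only [chi, if_neg ha]
      exact le_trans (min_le_left _ _) (nonneg _)

theorem stmt_5 (star tri : I → I → I) (htri : IsTnorm tri) (htric : IsCont tri)
    (h : IsTnormOnL (conv star tri)) :
    ∀ x : I, star 1 x = x ∧ star x 1 = x := by
  intro x
  have hV := Vfn_inL x
  have hchi := chi_one_inL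
  have hneut : conv star tri (Vfn x) (chi 1) = Vfn x := h.2.2.2.1 (Vfn x) hV
  have hcomm : conv star tri (chi 1) (Vfn x) = Vfn x := by
    rw [h.2.1 (chi 1) (Vfn x) hchi hV]; exact hneut
  have htri11 : tri (1 : I) 1 = 1 := htri.2.2.2.2.1 1
  constructor
  · have := congrFun hcomm 1
    rw [Vfn_one] at this
    have hset : {a : I | ∃ y z : I, tri y z = 1 ∧ a = star (chi 1 y) (Vfn x z)}
        = {star 1 x} := by
      ext a
      constructor
      · rintro ⟨y, z, hyz, rfl⟩
        obtain ⟨rfl, rfl⟩ := tri_eq_one_iff tri htri hyz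
        simp [chi, Vfn_one]
      · rintro rfl
        exact ⟨1, 1, htri11, by simp [chi, Vfn_one]⟩
    have hc : conv star tri (chi 1) (Vfn x) 1 = star 1 x := by
      unfold conv; rw [hset, sSup_singleton]
    rw [← hc]; exact this
  · have := congrFun hneut 1
    rw [Vfn_one] at this
    have hset : {a : I | ∃ y z : I, tri y z = 1 ∧ a = star (Vfn x y) (chi 1 z)}
        = {star x 1} := by
      ext a
      constructor
      · rintro ⟨y, z, hyz, rfl⟩
        obtain ⟨rfl, rfl⟩ := tri_eq_one_iff tri htri hyz
        simp [chi, Vfn_one]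
      · rintro rfl
        exact ⟨1, 1, htri11, by simp [chi, Vfn_one]⟩
    have hc : conv star tri (Vfn x) (chi 1) 1 = star x 1 := by
      unfold conv; rw [hset, sSup_singleton]
    rw [← hc]; exact this
end
end

section
/- Let ▽ be a continuous t-conorm on I = [0,1] and ⋆ a binary operation on I. If the convolution ⋎ is a t-conorm on L, then ⋆ is a t-norm on I, i.e., ⋆ is commutative, associative, increasing in each argument, and has 1 as neutral element. -/
open unitInterval

noncomputable section

-- auxiliary development to be inserted before stmt_10
lemma I_le_one (x : I) : x ≤ 1 := le_one'
lemma I_nonneg (x : I) : (0:I) ≤ x := nonneg'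
lemma I_zero_ne_one : (0 : I) ≠ 1 := fun h => (one_ne_zero (α := ℝ)) (congrArg Subtype.val h).symm

def rfn (a : I) : I → I := fun t => if t = 1 then 1 else a

lemma rfn_one (a : I) : rfn a 1 = 1 := if_pos rfl
lemma rfn_ne (a : I) {t : I} (ht : t ≠ 1) : rfn a t = a := if_neg ht
lemma rfn_zero (a : I) : rfn a 0 = a := rfn_ne a I_zero_ne_one
lemma rfn_inj {a b : I} (h : rfn a = rfn b) : a = b := by
  have := congrFun h 0; rwa [rfn_zero, rfn_zero] at this

lemma InL_rfn (a : I) : InL (rfn a) := by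
  constructor
  · refine le_antisymm (sSup_le ?_) (le_sSup ⟨1, rfn_one a⟩)
    rintro b ⟨t, rfl⟩; exact le_one'
  · intro x y z hxy _
    by_cases hy : y = 1
    · rw [hy, rfn_one]; exact le_one'
    · have hx : x ≠ 1 := fun hx1 => hy (le_antisymm le_one' (hx1 ▸ hxy))
      rw [rfn_ne a hx, rfn_ne a hy]; exact min_le_left _ _

lemma InL_one : InL (fun _ : I => (1:I)) := by
  constructor
  · exact le_antisymm (sSup_le (by rintro b ⟨t, rfl⟩; exact le_one')) (le_sSup ⟨0, rfl⟩)
  · intro x y z _ _; exact min_le_left _ _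

lemma chi_zero_zero : chi 0 0 = 1 := if_pos rfl

lemma star_one_one (star dis : I → I → I) (hdis : IsTconorm dis)
    (hcl : ∀ f g, InL f → InL g → InL (conv star dis f g)) : star 1 1 = 1 := by
  obtain ⟨_, _, _, _, _, h0r⟩ := hdis
  have hC := (hcl _ _ InL_one InL_one).1
  have hconv : conv star dis (fun _ => (1:I)) (fun _ => (1:I)) = fun _ => star 1 1 := by
    funext x
    show sSup {a : I | ∃ y z : I, dis y z = x ∧ a = star 1 1} = star 1 1
    have hset : {a : I | ∃ y z : I, dis y z = x ∧ a = star 1 1} = {star 1 1} := by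
      ext α
      constructor
      · rintro ⟨y, z, _, rfl⟩; rfl
      · rintro rfl; exact ⟨x, 0, h0r x, rfl⟩
    rw [hset, sSup_singleton]
  rw [hconv] at hC
  unfold IsNormal at hC
  rwa [Set.range_const, sSup_singleton] at hC

lemma conv_rfn (star dis : I → I → I) (hdis : IsTconorm dis) (h11 : star 1 1 = 1)
    (a b : I) : conv star dis (rfn a) (rfn b) = rfn (star a b) := by
  obtain ⟨_, _, hm1, hm2, h0l, h0r⟩ := hdis
  funext x
  show sSup {α : I | ∃ y z : I, dis y z = x ∧ α = star (rfn a y) (rfn b z)} = rfn (star a b) x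
  by_cases hx : x = 1
  · subst hx
    rw [rfn_one]
    refine le_antisymm (sSup_le ?_) (le_sSup ?_)
    · rintro α ⟨y, z, _, rfl⟩; exact le_one'
    · refine ⟨1, 1, ?_, ?_⟩
      · refine le_antisymm le_one' ?_
        calc (1:I) = dis 1 0 := (h0r 1).symm
          _ ≤ dis 1 1 := hm2 1 nonneg'
      · rw [rfn_one, rfn_one, h11]
  · have hset : {α : I | ∃ y z : I, dis y z = x ∧ α = star (rfn a y) (rfn b z)}
        = {star a b} := by
      ext α
      constructor
      · rintro ⟨y, z, hyz, rfl⟩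
        have hy : y ≠ 1 := by
          rintro rfl
          refine hx (le_antisymm le_one' ?_)
          calc (1:I) = dis 1 0 := (h0r 1).symm
            _ ≤ dis 1 z := hm2 1 nonneg'
            _ = x := hyz
        have hz : z ≠ 1 := by
          rintro rfl
          refine hx (le_antisymm le_one' ?_)
          calc (1:I) = dis 0 1 := (h0l 1).symm
            _ ≤ dis y 1 := hm1 1 nonneg'
            _ = x := hyz
        rw [rfn_ne a hy, rfn_ne b hz]; rfl
      · rintro rfl
        exact ⟨x, 0, h0r x, by rw [rfn_ne a hx, rfn_zero]⟩
    rw [hset, sSup_singleton, rfn_ne _ hx]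

lemma fmeet_rfn (c d : I) : fmeet (rfn c) (rfn d) = rfn (max c d) := by
  funext x
  show sSup {α : I | ∃ y z : I, min y z = x ∧ α = min (rfn c y) (rfn d z)} = rfn (max c d) x
  by_cases hx : x = 1
  · subst hx
    rw [rfn_one]
    refine le_antisymm (sSup_le ?_) (le_sSup ?_)
    · rintro α ⟨y, z, _, rfl⟩; exact le_one'
    · refine ⟨1, 1, min_self 1, ?_⟩
      rw [rfn_one, rfn_one, min_self]
  · rw [rfn_ne _ hx]
    refine le_antisymm (sSup_le ?_) (le_sSup ?_)
    · rintro α ⟨y, z, hyz, rfl⟩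
      rcases min_choice y z with h | h
      · have hyx : y = x := by rw [← hyz, h]
        have : y ≠ 1 := hyx ▸ hx
        rw [rfn_ne c this]
        exact le_trans (min_le_left _ _) (le_max_left _ _)
      · have hzx : z = x := by rw [← hyz, h]
        have : z ≠ 1 := hzx ▸ hx
        rw [rfn_ne d this]
        exact le_trans (min_le_right _ _) (le_max_right _ _)
    · rcases le_total d c with hdc | hcd
      · refine ⟨x, 1, min_eq_left le_one', ?_⟩
        rw [rfn_ne c hx, rfn_one, min_eq_left le_one', max_eq_left hdc]
      · refine ⟨1, x, min_eq_right le_one', ?_⟩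
        rw [rfn_one, rfn_ne d hx, min_eq_right le_one', max_eq_right hcd]

lemma sqle_rfn_iff (c d : I) : sqle (rfn c) (rfn d) ↔ d ≤ c := by
  unfold sqle
  rw [fmeet_rfn]
  constructor
  · intro h
    have := rfn_inj h
    exact max_eq_left_iff.mp this
  · intro h
    rw [max_eq_left h]

theorem stmt_10 (star dis : I → I → I) (hdis : IsTconorm dis) (hdisc : IsCont dis)
    (h : IsTconormOnL (conv star dis)) : IsTnorm star := by
  obtain ⟨hcl, hcomm, hassoc, hneut, hmono⟩ := h
  have h11 : star 1 1 = 1 := star_one_one star dis hdis hcl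
  have key : ∀ a b : I, conv star dis (rfn a) (rfn b) = rfn (star a b) :=
    conv_rfn star dis hdis h11
  have hscomm : ∀ x y : I, star x y = star y x := by
    intro x y
    have := hcomm (rfn x) (rfn y) (InL_rfn x) (InL_rfn y)
    rw [key, key] at this
    exact rfn_inj this
  have hsassoc : ∀ x y z : I, star (star x y) z = star x (star y z) := by
    intro x y z
    have := hassoc (rfn x) (rfn y) (rfn z) (InL_rfn x) (InL_rfn y) (InL_rfn z)
    rw [key, key, key, key] at this
    exact rfn_inj this
  have hone : ∀ x : I, star x 1 = x := by
    intro x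
    obtain ⟨_, _, hm1, hm2, h0l, h0r⟩ := hdis
    have hneu := congrFun (hneut (rfn x) (InL_rfn x)) 0
    have hset : {α : I | ∃ y z : I, dis y z = (0:I) ∧ α = star (rfn x y) (chi 0 z)}
        = {star x 1} := by
      ext α
      constructor
      · rintro ⟨y, z, hyz, rfl⟩
        have hy : y = 0 := by
          refine le_antisymm ?_ nonneg'
          calc y = dis y 0 := (h0r y).symm
            _ ≤ dis y z := hm2 y nonneg'
            _ = 0 := hyz
        have hz : z = 0 := by
          refine le_antisymm ?_ nonneg'
          calc z = dis 0 z := (h0l z).symm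
            _ ≤ dis y z := hm1 z nonneg'
            _ = 0 := hyz
        rw [hy, hz, rfn_zero, chi_zero_zero]
        rfl
      · rintro rfl
        exact ⟨0, 0, h0r 0, by rw [rfn_zero, chi_zero_zero]⟩
    have hL : conv star dis (rfn x) (chi 0) 0 = star x 1 := by
      show sSup {α : I | ∃ y z : I, dis y z = (0:I) ∧ α = star (rfn x y) (chi 0 z)}
          = star x 1
      rw [hset, sSup_singleton]
    rw [hL, rfn_zero] at hneu
    exact hneu
  have hmon2 : ∀ x : I, Monotone fun y => star x y := by
    intro x b b' hbb'
    have hs : sqle (rfn b') (rfn b) := (sqle_rfn_iff b' b).2 hbb'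
    have := hmono (rfn x) (rfn b') (rfn b) (InL_rfn _) (InL_rfn _) (InL_rfn _) hs
    rw [key, key] at this
    exact (sqle_rfn_iff _ _).1 this
  have hmon1 : ∀ y : I, Monotone fun x => star x y := by
    intro y a a' haa'
    have := hmon2 y haa'
    simpa only [hscomm y a, hscomm y a'] using this
  exact ⟨hscomm, hsassoc, hmon1, hmon2,
    fun x => (hscomm 1 x).trans (hone x), hone⟩
end
end

section
/- Let ⋆ be a continuous t-norm on I = [0,1] and △ a binary operation on I. If the convolution ⋏ defined by (f ⋏ g)(x) = sup{f(y) ⋆ g(z) : y △ z = x} is associative on L (i.e., (f ⋏ g) ⋏ h = f ⋏ (g ⋏ h) for all f, g, h ∈ L), then △ is associative on I. -/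
open unitInterval

noncomputable section

lemma chi_inL (x : I) : InL (chi x) := by
  constructor
  · apply le_antisymm (sSup_le fun a _ => le_one')
    apply le_sSup
    exact ⟨x, by simp [chi]⟩
  · intro a b c hab hbc
    by_cases ha : a = x
    · by_cases hc : c = x
      · have : b = x := le_antisymm (hc ▸ hbc) (ha ▸ hab)
        simp [chi, this]
        exact Or.inl le_one'
      · simp [chi, hc]
    · simp [chi, ha]

lemma star_zero_right {star : I → I → I} (hstar : IsTnorm star) (u : I) :
    star u 0 = 0 := by
  apply le_antisymm _ nonneg'
  calc star u 0 ≤ star 1 0 := hstar.2.2.1 0 (le_one u)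
    _ = 0 := hstar.2.2.2.2.1 0

lemma star_zero_left {star : I → I → I} (hstar : IsTnorm star) (u : I) :
    star 0 u = 0 := by
  rw [hstar.1]; exact star_zero_right hstar u

lemma conv_chi {star tri : I → I → I} (hstar : IsTnorm star) (x y : I) :
    conv star tri (chi x) (chi y) = chi (tri x y) := by
  funext t
  unfold conv
  by_cases ht : t = tri x y
  · rw [chi, if_pos ht]
    refine le_antisymm le_one' ?_
    apply le_sSup
    refine ⟨x, y, ht.symm, ?_⟩
    simp only [chi, if_pos rfl]
    exact (hstar.2.2.2.2.1 1).symm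
  · rw [chi, if_neg ht]
    refine le_antisymm ?_ nonneg'
    apply sSup_le
    rintro a ⟨y', z', htri, rfl⟩
    by_cases hy : y' = x
    · by_cases hz : z' = y
      · exact absurd (hy ▸ hz ▸ htri.symm) ht
      · simp only [chi, if_neg hz]
        rw [star_zero_right hstar]
    · simp only [chi, if_neg hy]
      rw [star_zero_left hstar]

theorem stmt_15 (star tri : I → I → I) (hstar : IsTnorm star) (hstarc : IsCont star)
    (h : ∀ f g h : I → I, InL f → InL g → InL h →
      conv star tri (conv star tri f g) h = conv star tri f (conv star tri g h)) :
    ∀ x y z : I, tri (tri x y) z = tri x (tri y z) := by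
  intro x y z
  have h1 := h (chi x) (chi y) (chi z) (chi_inL x) (chi_inL y) (chi_inL z)
  rw [conv_chi hstar, conv_chi hstar, conv_chi hstar, conv_chi hstar] at h1
  have h2 := congrFun h1 (tri (tri x y) z)
  simp only [chi, if_pos rfl] at h2
  by_contra hne
  rw [if_neg hne] at h2
  exact one_ne_zero (congrArg Subtype.val h2)
end
end
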